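/- Let V be a commutative unital quantale, H₁ = (A₁, F₁) and H₂ = (A₂, F₂) V-F-semilattices, L a V-module, and f : A₁ → A₂ a lax morphism of V-F-semilattices (a V-module homomorphism with F₂(f(a)) ≤ f(F₁(a)) for all a). Then precomposition J[f, L] : α ↦ α ∘ f maps V-module homomorphisms A₂ → L to V-module homomorphisms A₁ → L, and is a V-frame homomorphism from (Hom(A₂,L), s) to (Hom(A₁,L), r): s(α, β) ≤ r(α∘f, β∘f) for all α, β : A₂ → L, where s(α,β) = ⋀_{x∈A₂}(β(x) → α(F₂(x))), r(γ,δ) = ⋀_{y∈A₁}(δ(y) → γ(F₁(y))), and a → b = ⨆{v | v*a ≤ b}. -/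
import Mathlib


/-- A commutative unital quantale structure on a complete lattice `V`. -/
structure CommQuantale (V : Type*) [CompleteLattice V] where
  mul : V → V → V
  e : V
  mul_assoc : ∀ a b c : V, mul (mul a b) c = mul a (mul b c)
  mul_comm : ∀ a b : V, mul a b = mul b a
  mul_sSup : ∀ (a : V) (S : Set V), mul a (sSup S) = ⨆ s ∈ S, mul a s
  sSup_mul : ∀ (S : Set V) (a : V), mul (sSup S) a = ⨆ s ∈ S, mul s a
  mul_e : ∀ a : V, mul a e = a
  e_mul : ∀ a : V, mul e a = a

/-- A (left) module over a commutative unital quantale. -/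
structure QModule {V : Type*} [CompleteLattice V] (Q : CommQuantale V)
    (A : Type*) [CompleteLattice A] where
  smul : V → A → A
  smul_sSup : ∀ (v : V) (S : Set A), smul v (sSup S) = ⨆ s ∈ S, smul v s
  sSup_smul : ∀ (S : Set V) (a : A), smul (sSup S) a = ⨆ v ∈ S, smul v a
  mul_smul : ∀ (u v : V) (a : A), smul u (smul v a) = smul (Q.mul u v) a
  e_smul : ∀ a : A, smul Q.e a = a

/-- A homomorphism of quantale modules: preserves all joins and the action. -/
def IsModHom {V A B : Type*} [CompleteLattice V] [CompleteLattice A] [CompleteLattice B]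
    {Q : CommQuantale V} (M : QModule Q A) (N : QModule Q B) (f : A → B) : Prop :=
  (∀ S : Set A, f (sSup S) = ⨆ a ∈ S, f a) ∧
  ∀ (v : V) (a : A), f (M.smul v a) = N.smul v (f a)

theorem QModule.smul_iSup {V A : Type*} [CompleteLattice V] [CompleteLattice A]
    {Q : CommQuantale V} (M : QModule Q A) {ι : Sort*} (v : V) (g : ι → A) :
    M.smul v (⨆ i, g i) = ⨆ i, M.smul v (g i) := by
  rw [iSup, M.smul_sSup, iSup_range]

theorem QModule.iSup_smul {V A : Type*} [CompleteLattice V] [CompleteLattice A]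
    {Q : CommQuantale V} (M : QModule Q A) {ι : Sort*} (g : ι → V) (a : A) :
    M.smul (⨆ i, g i) a = ⨆ i, M.smul (g i) a := by
  rw [iSup, M.sSup_smul, iSup_range]

/-- The pointwise module structure on `T → A`. -/
def QModule.pi {V : Type*} [CompleteLattice V] {Q : CommQuantale V}
    {A : Type*} [CompleteLattice A] (M : QModule Q A) (T : Type*) :
    QModule Q (T → A) where
  smul v x := fun t => M.smul v (x t)
  smul_sSup v S := by
    funext t
    simp only [sSup_apply, iSup_apply]
    rw [M.smul_iSup]
    exact (iSup_subtype' (p := fun x => x ∈ S) (f := fun x _ => M.smul v (x t))).symm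
  sSup_smul S a := by
    funext t
    simp only [iSup_apply]
    rw [M.sSup_smul]
  mul_smul u v a := by funext t; exact M.mul_smul u v (a t)
  e_smul a := by funext t; exact M.e_smul (a t)

/-- The tense operator constructed from a `V`-frame `r` on `T`. -/
def FJ {V A T : Type*} [CompleteLattice V] [CompleteLattice A] {Q : CommQuantale V}
    (M : QModule Q A) (r : T → T → V) (x : T → A) : T → A :=
  fun i => ⨆ k, M.smul (r i k) (x k)


/-- The residual `a → b = ⨆{v | v * a ≤ b}` in a `V`-module. -/
def resid {V L : Type*} [CompleteLattice V] [CompleteLattice L]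
    {Q : CommQuantale V} (M : QModule Q L) (a b : L) : V :=
  sSup {v : V | M.smul v a ≤ b}

/-- The frame relation `r(α, β) = ⋀_x (β(x) → α(F(x)))` on module homomorphisms. -/
def frameRel {V A L : Type*} [CompleteLattice V] [CompleteLattice A] [CompleteLattice L]
    {Q : CommQuantale V} (ML : QModule Q L) (F : A → A) (α β : A → L) : V :=
  ⨅ x : A, resid ML (β x) (α (F x))


theorem IsModHom.map_iSup {V A B : Type*} [CompleteLattice V] [CompleteLattice A]
    [CompleteLattice B] {Q : CommQuantale V} {M : QModule Q A} {N : QModule Q B}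
    {f : A → B} (hf : IsModHom M N f) {ι : Sort*} (g : ι → A) :
    f (⨆ i, g i) = ⨆ i, f (g i) := by
  rw [iSup, hf.1, iSup_range]

theorem IsModHom.mono {V A B : Type*} [CompleteLattice V] [CompleteLattice A]
    [CompleteLattice B] {Q : CommQuantale V} {M : QModule Q A} {N : QModule Q B}
    {f : A → B} (hf : IsModHom M N f) {a b : A} (hab : a ≤ b) : f a ≤ f b := by
  have h : f (sSup {a, b}) = ⨆ x ∈ ({a, b} : Set A), f x := hf.1 _
  rw [iSup_pair, sSup_pair, sup_eq_right.2 hab] at h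
  rw [h]; exact le_sup_left

theorem resid_mono {V L : Type*} [CompleteLattice V] [CompleteLattice L]
    {Q : CommQuantale V} (M : QModule Q L) {a b b' : L} (h : b ≤ b') :
    resid M a b ≤ resid M a b' :=
  sSup_le_sSup fun _ hv => le_trans hv h

/-- precomposition with a lax morphism `f : (A₁,F₁) → (A₂,F₂)`
gives a `V`-frame homomorphism `J[f, L] : J[H₂, L] → J[H₁, L]`. -/
theorem stmt13 {V A₁ A₂ L : Type*} [CompleteLattice V] [CompleteLattice A₁]
    [CompleteLattice A₂] [CompleteLattice L]
    (Q : CommQuantale V) (M₁ : QModule Q A₁) (M₂ : QModule Q A₂) (ML : QModule Q L)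
    (F₁ : A₁ → A₁) (F₂ : A₂ → A₂)
    (hF₁ : IsModHom M₁ M₁ F₁) (hF₂ : IsModHom M₂ M₂ F₂)
    (f : A₁ → A₂) (hf : IsModHom M₁ M₂ f)
    (hlax : ∀ a : A₁, F₂ (f a) ≤ f (F₁ a)) :
    (∀ α : A₂ → L, IsModHom M₂ ML α → IsModHom M₁ ML (α ∘ f)) ∧
    (∀ α β : A₂ → L, IsModHom M₂ ML α → IsModHom M₂ ML β →
      frameRel ML F₂ α β ≤ frameRel ML F₁ (α ∘ f) (β ∘ f)) := by
  constructor
  · rintro α ⟨hα1, hα2⟩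
    constructor
    · intro S
      have hαh : IsModHom M₂ ML α := ⟨hα1, hα2⟩
      simp only [Function.comp_apply, hf.1 S]
      rw [hαh.map_iSup]
      exact iSup_congr fun a => hαh.map_iSup _
    · intro v a
      simp [Function.comp_apply, hf.2, hα2]
  · intro α β hα hβ
    refine le_iInf fun y => ?_
    refine le_trans (iInf_le _ (f y)) ?_
    exact resid_mono ML (hα.mono (hlax y))
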